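/- Let r ≥ 2 be a real number. Then for all a ≥ 0 and all t ≥ 0: 2^{−r} (a+t)^{r−2} t² ≤ φ_a(t) ≤ (a+t)^{r−2} t², where φ_a(t) = ∫_0^t (a+s)^{r−2} s ds. -/

import Mathlib

open MeasureTheory

/-- The shifted function `φ_a(t) = ∫_0^t (a+s)^{r−2} s ds`. -/
noncomputable def phi (r a t : ℝ) : ℝ := ∫ s in (0 : ℝ)..t, (a + s) ^ (r - 2) * s

/-! The weight `(a+s)^{r-2}` is increasing in `s`: bounding it above by its value at `s = t`
gives the upper bound, and bounding it below on `[t/2, t]` by `((a+t)/2)^{r-2}` (as `a ≥ 0`)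
gives the lower bound, since `∫_{t/2}^t s ds = 3t²/8 ≥ t²/4`. -/

lemma continuous_shifted_weight {p : ℝ} (hp : 0 ≤ p) (a : ℝ) :
    Continuous fun s : ℝ => (a + s) ^ p * s :=
  ((continuous_const.add continuous_id).rpow_const fun _ => Or.inr hp).mul continuous_id

lemma integral_const_mul_id (c u v : ℝ) :
    ∫ s in u..v, c * s = c * ((v ^ 2 - u ^ 2) / 2) := by
  rw [intervalIntegral.integral_const_mul, integral_id]

lemma two_rpow_neg_mul_rpow_sub_two {x : ℝ} (hx : 0 ≤ x) (r : ℝ) :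
    (2 : ℝ) ^ (-r) * x ^ (r - 2) = (x / 2) ^ (r - 2) / 4 := by
  rw [Real.div_rpow hx zero_le_two, show -r = -(r - 2) + (-2 : ℤ) by push_cast; ring,
    Real.rpow_add two_pos, Real.rpow_neg zero_le_two, Real.rpow_intCast]
  norm_num
  ring

section

variable {r a t : ℝ}

lemma phi_le (hr : 2 ≤ r) (ha : 0 ≤ a) (ht : 0 ≤ t) :
    phi r a t ≤ (a + t) ^ (r - 2) * (t ^ 2 / 2) := by
  have hp : 0 ≤ r - 2 := by linarith
  calc phi r a t ≤ ∫ s in (0 : ℝ)..t, (a + t) ^ (r - 2) * s := by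
        refine intervalIntegral.integral_mono_on ht
          ((continuous_shifted_weight hp a).intervalIntegrable _ _)
          ((continuous_const_mul _).intervalIntegrable _ _) fun s hs => ?_
        exact mul_le_mul_of_nonneg_right
          (Real.rpow_le_rpow (by linarith [hs.1]) (by linarith [hs.2]) hp) hs.1
    _ = (a + t) ^ (r - 2) * (t ^ 2 / 2) := by rw [integral_const_mul_id]; ring

lemma le_phi (hr : 2 ≤ r) (ha : 0 ≤ a) (ht : 0 ≤ t) :
    ((a + t) / 2) ^ (r - 2) * (3 / 8 * t ^ 2) ≤ phi r a t := by
  have hp : 0 ≤ r - 2 := by linarith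
  have hint : ∀ u v : ℝ, IntervalIntegrable (fun s => (a + s) ^ (r - 2) * s) volume u v :=
    fun u v => (continuous_shifted_weight hp a).intervalIntegrable u v
  have head_nonneg : 0 ≤ ∫ s in (0 : ℝ)..t / 2, (a + s) ^ (r - 2) * s :=
    intervalIntegral.integral_nonneg (by linarith) fun s hs =>
      mul_nonneg (Real.rpow_nonneg (by linarith [hs.1]) _) hs.1
  have tail_ge : ∫ s in t / 2..t, ((a + t) / 2) ^ (r - 2) * s
      ≤ ∫ s in t / 2..t, (a + s) ^ (r - 2) * s := by
    refine intervalIntegral.integral_mono_on (by linarith)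
      ((continuous_const_mul _).intervalIntegrable _ _) (hint _ _) fun s hs => ?_
    exact mul_le_mul_of_nonneg_right
      (Real.rpow_le_rpow (by linarith) (by linarith [hs.1]) hp) (by linarith [hs.1])
  calc ((a + t) / 2) ^ (r - 2) * (3 / 8 * t ^ 2)
      = ∫ s in t / 2..t, ((a + t) / 2) ^ (r - 2) * s := by rw [integral_const_mul_id]; ring
    _ ≤ ∫ s in t / 2..t, (a + s) ^ (r - 2) * s := tail_ge
    _ ≤ phi r a t := by
        rw [phi, ← intervalIntegral.integral_add_adjacent_intervals (hint 0 (t / 2)) (hint _ t)]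
        linarith

end

/-- Two-sided equivalence, uniform in the shift `a`: for `r ≥ 2`,
`2^{−r} (a+t)^{r−2} t² ≤ φ_a(t) ≤ (a+t)^{r−2} t²` for all `a, t ≥ 0`. -/
theorem phi_equiv_weight
    (r : ℝ) (hr : 2 ≤ r) :
    ∀ a t : ℝ, 0 ≤ a → 0 ≤ t →
      (2 : ℝ) ^ (-r) * (a + t) ^ (r - 2) * t ^ 2 ≤ phi r a t ∧
        phi r a t ≤ (a + t) ^ (r - 2) * t ^ 2 := by
  intro a t ha ht
  have hat : 0 ≤ a + t := by linarith
  have weight_nonneg : 0 ≤ (a + t) ^ (r - 2) := Real.rpow_nonneg hat _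
  have half_weight_nonneg : 0 ≤ ((a + t) / 2) ^ (r - 2) := Real.rpow_nonneg (by linarith) _
  constructor
  · rw [two_rpow_neg_mul_rpow_sub_two hat]
    nlinarith [le_phi hr ha ht, mul_nonneg half_weight_nonneg (sq_nonneg t)]
  · nlinarith [phi_le hr ha ht, mul_nonneg weight_nonneg (sq_nonneg t)]
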